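/- arXiv:2410.14127 — 3 statements merged into one kernel-verified Lean document; each statement's English description precedes it below -/
import Mathlib

section
/- Let X be a finite nonempty type, let q be a probability mass function on X with q(x) > 0 for all x, and let r : X → ℝ be strictly positive. Then applying the selection map with fitness r and then with the pointwise inverse fitness r⁻¹ (where r⁻¹(x) = 1/r(x)) recovers the original distribution: f(f(q, r), r⁻¹) = q. -/
/-- The selection map: `f(q,r)(x) = r(x)·q(x) / Σ_{x'} r(x')·q(x')`. -/
noncomputable def select {X : Type*} [Fintype X] (q r : X → ℝ) : X → ℝ :=
  fun x => r x * q x / ∑ x' : X, r x' * q x'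

/-- selection with strictly positive fitness can be run in reverse:
applying the selection map with `r` and then with the pointwise inverse `r⁻¹`
recovers the original distribution. -/
theorem select_inverse {X : Type*} [Fintype X] [Nonempty X]
    (q r : X → ℝ)
    (hq0 : ∀ x, 0 < q x) (hq1 : ∑ x : X, q x = 1)
    (hr : ∀ x, 0 < r x) :
    select (select q r) (fun x => (r x)⁻¹) = q := by
  have hS : 0 < ∑ x : X, r x * q x :=
    Finset.sum_pos (fun x _ => mul_pos (hr x) (hq0 x)) Finset.univ_nonempty
  set S := ∑ x : X, r x * q x with hSdef
  have key : ∀ x, (r x)⁻¹ * select q r x = q x / S := by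
    intro x
    simp only [select, ← hSdef, mul_div_assoc']
    rw [inv_mul_cancel_left₀ (hr x).ne']
  have hsum : ∑ x : X, (r x)⁻¹ * select q r x = 1 / S := by
    simp only [key]
    rw [← Finset.sum_div, hq1]
  funext x
  show ((r x)⁻¹ * select q r x) / ∑ x' : X, (r x')⁻¹ * select q r x' = q x
  rw [key, hsum]
  field_simp
end

section
/- Let X be a finite nonempty type and let r : X → ℝ be strictly positive. Then for every probability mass function q⋆ on X with q⋆(x) > 0 for all x, there exists a probability mass function q̃ᶻ on X with q̃ᶻ(x) > 0 for all x such that f(q̃ᶻ, r) = q⋆; namely, q̃ᶻ(x) = (q⋆(x)/r(x)) / Σ_{x'} (q⋆(x')/r(x')). That is, the selection map with fitness r is surjective onto the set of everywhere-positive probability mass functions on X. -/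
/-- Proposition S1 of the paper: the selection map with strictly positive
fitness `r` is surjective onto everywhere-positive pmfs: any target distribution `q⋆`
arises from the pre-selection distribution `q̃ᶻ(x) = (q⋆(x)/r(x)) / Σ_{x'} q⋆(x')/r(x')`. -/
theorem select_surjective {X : Type*} [Fintype X] [Nonempty X]
    (r : X → ℝ) (hr : ∀ x, 0 < r x) :
    ∀ qstar : X → ℝ, (∀ x, 0 < qstar x) → (∑ x : X, qstar x = 1) →
      ∃ qz : X → ℝ,
        (∀ x, 0 < qz x) ∧ (∑ x : X, qz x = 1) ∧ select qz r = qstar ∧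
        (∀ x, qz x = (qstar x / r x) / ∑ x' : X, qstar x' / r x') := by
  intro qstar hq hsum
  set S : ℝ := ∑ x' : X, qstar x' / r x' with hS
  have hSpos : 0 < S := Finset.sum_pos (fun x _ => div_pos (hq x) (hr x)) Finset.univ_nonempty
  refine ⟨fun x => (qstar x / r x) / S, ?_, ?_, ?_, fun x => rfl⟩
  · exact fun x => div_pos (div_pos (hq x) (hr x)) hSpos
  · rw [← Finset.sum_div, ← hS, div_self hSpos.ne']
  · funext x
    have key : ∀ y : X, r y * (qstar y / r y / S) = qstar y / S := by
      intro y
      rw [div_div, ← mul_div_assoc, mul_div_mul_left _ _ (hr y).ne']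
    simp only [select, key]
    rw [← Finset.sum_div, hsum]
    field_simp
end

section
/- Let X be a finite nonempty type, let qᶻ be a probability mass function on X with qᶻ(x) > 0 for all x, and let r, r' : X → ℝ be strictly positive fitness functions. If the selection map outputs agree, f(qᶻ, r) = f(qᶻ, r'), then r and r' are proportional: there exists c > 0 such that r(x) = c·r'(x) for all x ∈ X. Consequently, if in addition r(x₀) = r'(x₀) = 1 at some reference point x₀, then r = r'. -/
/-!
Clearing denominators in `select q r x = select q r' x` gives `r x * S' = r' x * S`, where `S`, `S'`
are the mean fitnesses of `r`, `r'` under `q`; so `r = (S / S') • r'`. A normalization at one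
point forces `S / S' = 1`.
-/

section

variable {X : Type*} [Fintype X]

def meanFitness (q r : X → ℝ) : ℝ :=
  ∑ x, r x * q x

theorem select_apply (q r : X → ℝ) (x : X) : select q r x = r x * q x / meanFitness q r :=
  rfl

theorem meanFitness_pos [Nonempty X] {q r : X → ℝ} (hq : ∀ x, 0 < q x) (hr : ∀ x, 0 < r x) :
    0 < meanFitness q r :=
  Finset.sum_pos (fun x _ => mul_pos (hr x) (hq x)) Finset.univ_nonempty

theorem eq_div_mul_of_select_eq {q r r' : X → ℝ} (hq : ∀ x, q x ≠ 0)
    (hS : meanFitness q r ≠ 0) (hS' : meanFitness q r' ≠ 0) (h : select q r = select q r')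
    (x : X) : r x = meanFitness q r / meanFitness q r' * r' x := by
  have hx := congrFun h x
  rw [select_apply, select_apply, div_eq_div_iff hS hS'] at hx
  have hcross : r x * meanFitness q r' = r' x * meanFitness q r :=
    mul_right_cancel₀ (hq x) (by linear_combination hx)
  field_simp
  linear_combination hcross

end

theorem funext_of_eq_mul_of_eq {X : Type*} {r r' : X → ℝ} {c : ℝ} (h : ∀ x, r x = c * r' x)
    {x₀ : X} (h₀ : r x₀ = r' x₀) (hne : r' x₀ ≠ 0) : r = r' := by
  have hc : c = 1 := by
    rw [h x₀] at h₀
    exact (mul_eq_right₀ hne).mp h₀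
  funext x
  rw [h x, hc, one_mul]

theorem select_fitness_unique_general {X : Type*} [Fintype X] [Nonempty X]
    (qz r r' : X → ℝ)
    (hqz0 : ∀ x, 0 < qz x)
    (hr : ∀ x, 0 < r x) (hr' : ∀ x, 0 < r' x)
    (heq : select qz r = select qz r') :
    (∃ c : ℝ, 0 < c ∧ ∀ x, r x = c * r' x) ∧
    (∀ x₀ : X, r x₀ = 1 → r' x₀ = 1 → r = r') := by
  have hS := meanFitness_pos hqz0 hr
  have hS' := meanFitness_pos hqz0 hr'
  have hprop := eq_div_mul_of_select_eq (fun x => (hqz0 x).ne') hS.ne' hS'.ne' heq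
  refine ⟨⟨_, div_pos hS hS', hprop⟩, fun x₀ h₁ h₁' => ?_⟩
  exact funext_of_eq_mul_of_eq hprop (h₁.trans h₁'.symm) (hr' x₀).ne'

/-- if two strictly positive fitness functions produce the same selected
distribution from an everywhere-positive pre-selection distribution, they are
proportional; with the normalization `r(x₀) = r'(x₀) = 1` they are equal. -/
theorem select_fitness_unique {X : Type*} [Fintype X] [Nonempty X]
    (qz r r' : X → ℝ)
    (hqz0 : ∀ x, 0 < qz x) (hqz1 : ∑ x : X, qz x = 1)
    (hr : ∀ x, 0 < r x) (hr' : ∀ x, 0 < r' x)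
    (heq : select qz r = select qz r') :
    (∃ c : ℝ, 0 < c ∧ ∀ x, r x = c * r' x) ∧
    (∀ x₀ : X, r x₀ = 1 → r' x₀ = 1 → r = r') :=
  select_fitness_unique_general qz r r' hqz0 hr hr' heq
end
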